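/- arXiv:math/0012129 — 2 statements merged into one kernel-verified Lean document; each statement's English description precedes it below -/
import Mathlib

section
/- Let V be a finite-dimensional representation of the Lie algebra sl2 over a field of characteristic zero, with standard basis (e, f, h). Then V decomposes as the direct sum V = ker(f) ⊕ im(e), where ker(f) denotes the kernel of the action of f and im(e) the image of the action of e. -/
open Module Set

namespace Sl2Aux

variable {k V : Type*} [Field k] [AddCommGroup V] [Module k V]

/-- The Casimir-type operator `h² + 2h + 4fe`. -/
def casOp (e f h : Module.End k V) : Module.End k V :=
  h*h + (2:k) • h + (4:k) • (f*e)

/-- Simultaneous generalized eigenspace of the Casimir operator and `h`. -/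
def wt (e f h : Module.End k V) (χ μ : k) : Submodule k V :=
  (casOp e f h).maxGenEigenspace χ ⊓ h.maxGenEigenspace μ

lemma comm_Ch (e f h : Module.End k V)
    (h1 : h * e = e * h + (2:k) • e)
    (h2 : h * f = f * h + (-2:k) • f) :
    Commute (casOp e f h) h := by
  have g1 : ∀ X : Module.End k V, h*(e*X) = e*(h*X) + (2:k)•(e*X) := fun X => by
    rw [← mul_assoc, h1, add_mul, smul_mul_assoc, mul_assoc]
  have g2 : ∀ X : Module.End k V, h*(f*X) = f*(h*X) + (-2:k)•(f*X) := fun X => by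
    rw [← mul_assoc, h2, add_mul, smul_mul_assoc, mul_assoc]
  show casOp e f h * h = h * casOp e f h
  unfold casOp
  simp only [add_mul, mul_add, smul_mul_assoc, mul_smul_comm, mul_assoc, smul_add, smul_smul,
    h1, h2, g1, g2]
  module

lemma comm_Ce (e f h : Module.End k V)
    (h1 : h * e = e * h + (2:k) • e)
    (h3 : e * f = f * e + h) :
    Commute (casOp e f h) e := by
  have g1 : ∀ X : Module.End k V, h*(e*X) = e*(h*X) + (2:k)•(e*X) := fun X => by
    rw [← mul_assoc, h1, add_mul, smul_mul_assoc, mul_assoc]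
  have g3 : ∀ X : Module.End k V, e*(f*X) = f*(e*X) + h*X := fun X => by
    rw [← mul_assoc, h3, add_mul, mul_assoc]
  show casOp e f h * e = e * casOp e f h
  unfold casOp
  simp only [add_mul, mul_add, smul_mul_assoc, mul_smul_comm, mul_assoc, smul_add, smul_smul,
    h1, h3, g1, g3]
  module

lemma comm_Cf (e f h : Module.End k V)
    (h2 : h * f = f * h + (-2:k) • f)
    (h3 : e * f = f * e + h) :
    Commute (casOp e f h) f := by
  have g2 : ∀ X : Module.End k V, h*(f*X) = f*(h*X) + (-2:k)•(f*X) := fun X => by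
    rw [← mul_assoc, h2, add_mul, smul_mul_assoc, mul_assoc]
  have g3 : ∀ X : Module.End k V, e*(f*X) = f*(e*X) + h*X := fun X => by
    rw [← mul_assoc, h3, add_mul, mul_assoc]
  show casOp e f h * f = f * casOp e f h
  unfold casOp
  simp only [add_mul, mul_add, smul_mul_assoc, mul_smul_comm, mul_assoc, smul_add, smul_smul,
    h2, h3, g2, g3]
  module

lemma semiconj_e (e h : Module.End k V)
    (h1 : h * e = e * h + (2:k) • e) (μ : k) :
    SemiconjBy e (h - μ•1) (h - (μ+2)•(1 : Module.End k V)) := by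
  show e * (h - μ•1) = (h - (μ+2)•(1 : Module.End k V)) * e
  simp only [mul_sub, sub_mul, smul_mul_assoc, mul_smul_comm, one_mul, mul_one, h1]
  module

lemma semiconj_f (f h : Module.End k V)
    (h2 : h * f = f * h + (-2:k) • f) (μ : k) :
    SemiconjBy f (h - μ•1) (h - (μ-2)•(1 : Module.End k V)) := by
  show f * (h - μ•1) = (h - (μ-2)•(1 : Module.End k V)) * f
  simp only [mul_sub, sub_mul, smul_mul_assoc, mul_smul_comm, one_mul, mul_one, h2]
  module

lemma identity_ef (e f h : Module.End k V) (h3 : e * f = f * e + h) (χ μ : k) :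
    ((casOp e f h - χ•1) - (h - μ•1)*(h - μ•1) - (2*μ-2)•(h - μ•1))
      = (4:k)•(e*f) - (χ - μ^2 + 2*μ)•(1 : Module.End k V) := by
  unfold casOp
  rw [h3]
  simp only [mul_sub, sub_mul, smul_sub, sub_smul, smul_add, add_smul, mul_smul_comm,
    smul_mul_assoc, smul_smul, mul_one, one_mul]
  module

lemma identity_fe (e f h : Module.End k V) (χ μ : k) :
    ((casOp e f h - χ•1) - (h - μ•1)*(h - μ•1) - (2*μ+2)•(h - μ•1))
      = (4:k)•(f*e) - (χ - μ^2 - 2*μ)•(1 : Module.End k V) := by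
  unfold casOp
  simp only [mul_sub, sub_mul, smul_sub, sub_smul, smul_add, add_smul, mul_smul_comm,
    smul_mul_assoc, smul_smul, mul_one, one_mul]
  module

lemma mapsTo_shift (e f h : Module.End k V) {g : Module.End k V} {μ ν : k}
    (hsc : SemiconjBy g (h - μ•1) (h - ν•(1 : Module.End k V)))
    (hgc : Commute (casOp e f h) g) (χ : k) :
    MapsTo g (wt e f h χ μ) (wt e f h χ ν) := by
  intro x hx
  obtain ⟨hx1, hx2⟩ := Submodule.mem_inf.mp hx
  refine Submodule.mem_inf.mpr ⟨Module.End.mapsTo_maxGenEigenspace_of_comm hgc χ hx1, ?_⟩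
  obtain ⟨n, hn⟩ := (Module.End.mem_maxGenEigenspace _ _ _).mp hx2
  refine (Module.End.mem_maxGenEigenspace _ _ _).mpr ⟨n, ?_⟩
  have hpow := (hsc.pow_right n).eq
  have heq : ((h - ν•(1 : Module.End k V))^n * g) x = (g * (h - μ•1)^n) x := by rw [← hpow]
  simpa [Module.End.mul_apply, hn] using heq

section fd
variable [FiniteDimensional k V]

lemma pow_finrank_eq_zero (g : Module.End k V) (μ : k) {x : V}
    (hx : x ∈ g.maxGenEigenspace μ) :
    ((g - μ•1)^(finrank k V)) x = 0 := by
  have hle := Module.End.genEigenspace_le_genEigenspace_finrank g μ ⊤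
  have hx' : x ∈ g.genEigenspace μ (finrank k V : ℕ) := hle hx
  rwa [Module.End.mem_genEigenspace_nat, LinearMap.mem_ker] at hx'

lemma nilp_on_wt (e f h : Module.End k V)
    (hch : Commute (casOp e f h) h) (χ μ a : k) {x : V}
    (hx : x ∈ wt e f h χ μ) :
    ∃ m, ((((casOp e f h - χ•1) - (h - μ•1)*(h - μ•1) - a•(h - μ•1)) ^ m
      : Module.End k V)) x = 0 := by
  classical
  set c := casOp e f h with hc
  set p : Submodule k V := wt e f h χ μ with hp
  have hmemc : ∀ y ∈ p, y ∈ c.maxGenEigenspace χ := fun y hy => (Submodule.mem_inf.mp hy).1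
  have hmemh : ∀ y ∈ p, y ∈ h.maxGenEigenspace μ := fun y hy => (Submodule.mem_inf.mp hy).2
  have hcp : ∀ y ∈ p, c y ∈ p := fun y hy => Submodule.mem_inf.mpr
    ⟨Module.End.mapsTo_maxGenEigenspace_of_comm (Commute.refl c) χ (hmemc y hy),
     Module.End.mapsTo_maxGenEigenspace_of_comm hch.symm μ (hmemh y hy)⟩
  have hhp : ∀ y ∈ p, h y ∈ p := fun y hy => Submodule.mem_inf.mpr
    ⟨Module.End.mapsTo_maxGenEigenspace_of_comm hch χ (hmemc y hy),
     Module.End.mapsTo_maxGenEigenspace_of_comm (Commute.refl h) μ (hmemh y hy)⟩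
  have hAp : ∀ y ∈ p, (c - χ•1) y ∈ p := fun y hy => by
    have heq : (c - χ•(1 : Module.End k V)) y = c y - χ • y := by
      simp [LinearMap.sub_apply]
    rw [heq]
    exact p.sub_mem (hcp y hy) (p.smul_mem χ hy)
  have hBp : ∀ y ∈ p, (h - μ•1) y ∈ p := fun y hy => by
    have heq : (h - μ•(1 : Module.End k V)) y = h y - μ • y := by
      simp [LinearMap.sub_apply]
    rw [heq]
    exact p.sub_mem (hhp y hy) (p.smul_mem μ hy)
  set A : Module.End k ↥p := (c - χ•1).restrict hAp with hA
  set B : Module.End k ↥p := (h - μ•1).restrict hBp with hB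
  have hglob : Commute (c - χ•(1 : Module.End k V)) (h - μ•1) :=
    (hch.sub_right ((Commute.one_right c).smul_right μ)).sub_left
      ((Commute.one_left _).smul_left χ)
  have hcommAB : Commute A B := by
    show A * B = B * A
    ext y
    show (((c - χ•1).restrict hAp) (((h - μ•1).restrict hBp) y) : V)
      = (((h - μ•1).restrict hBp) (((c - χ•1).restrict hAp) y) : V)
    rw [LinearMap.restrict_coe_apply, LinearMap.restrict_coe_apply,
      LinearMap.restrict_coe_apply, LinearMap.restrict_coe_apply,
      ← Module.End.mul_apply, ← Module.End.mul_apply, hglob.eq]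
  have hAnil : IsNilpotent A := by
    refine ⟨finrank k V, ?_⟩
    ext y
    rw [hA, Module.End.pow_restrict, LinearMap.restrict_coe_apply]
    simpa using pow_finrank_eq_zero (g := c) (μ := χ) (hmemc y y.2)
  have hBnil : IsNilpotent B := by
    refine ⟨finrank k V, ?_⟩
    ext y
    rw [hB, Module.End.pow_restrict, LinearMap.restrict_coe_apply]
    simpa using pow_finrank_eq_zero (g := h) (μ := μ) (hmemh y y.2)
  have hBBnil : IsNilpotent (B*B) := (Commute.refl B).isNilpotent_mul_left hBnil
  have haBnil : IsNilpotent (a•B) := hBnil.smul a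
  have hN : IsNilpotent (A - B*B - a•B) := by
    have c1 : Commute A (B*B) := hcommAB.mul_right hcommAB
    have c2 : Commute (A - B*B) (a•B) :=
      (hcommAB.smul_right a).sub_left (((Commute.refl B).mul_left (Commute.refl B)).smul_right a)
    exact c2.isNilpotent_sub (c1.isNilpotent_sub hAnil hBBnil) haBnil
  obtain ⟨m, hm⟩ := hN
  refine ⟨m, ?_⟩
  set N : Module.End k V := (c - χ•1) - (h - μ•1)*(h - μ•1) - a•(h - μ•1) with hNdef
  have hNp : ∀ y ∈ p, N y ∈ p := by
    intro y hy
    have heq : N y = (c - χ•1) y - (h - μ•1) ((h - μ•1) y) - a • ((h - μ•1) y) := by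
      simp [hNdef, LinearMap.sub_apply, Module.End.mul_apply]
    rw [heq]
    exact p.sub_mem (p.sub_mem (hAp y hy) (hBp _ (hBp y hy))) (p.smul_mem a (hBp y hy))
  have hres : N.restrict hNp = A - B*B - a•B := by
    ext y
    show (N.restrict hNp y : V) = ((A - B*B - a•B) y : V)
    rw [LinearMap.restrict_coe_apply]
    have hrhs : ((A - B*B - a•B) y : V) = (A y : V) - (B (B y) : V) - a • (B y : V) := by
      simp [LinearMap.sub_apply, Module.End.mul_apply, LinearMap.smul_apply]
    rw [hrhs, hA, hB]
    simp only [LinearMap.restrict_coe_apply]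
    simp [hNdef, LinearMap.sub_apply, Module.End.mul_apply]
  have hmx : ((N.restrict hNp)^m) ⟨x, hx⟩ = 0 := by rw [hres, hm]; rfl
  rw [Module.End.pow_restrict] at hmx
  have := congrArg Subtype.val hmx
  rw [LinearMap.restrict_coe_apply] at this
  simpa [hNdef] using this

lemma inj_ef (e f h : Module.End k V)
    (h3 : e * f = f * e + h)
    (hch : Commute (casOp e f h) h) (χ μ : k) {x : V} (hx : x ∈ wt e f h χ μ)
    (h0 : e (f x) = 0) (hs : χ ≠ μ^2 - 2*μ) : x = 0 := by
  set s : k := χ - μ^2 + 2*μ with hsdef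
  have hsne : s ≠ 0 := fun hzero => hs (by linear_combination hzero)
  obtain ⟨m, hm⟩ := nilp_on_wt e f h hch χ μ (2*μ-2) hx
  rw [identity_ef e f h h3] at hm
  set X : Module.End k V := (4:k)•(e*f) - s•1 with hX
  have key : ∀ n, (X^n) x = ((-s)^n) • x := by
    intro n
    induction n with
    | zero => simp
    | succ n ih =>
      have hXx : X x = -(s • x) := by
        simp [hX, LinearMap.sub_apply, Module.End.mul_apply, h0]
      rw [pow_succ, Module.End.mul_apply, hXx, map_neg, map_smul, ih, pow_succ']
      rw [smul_smul, ← neg_smul]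
      ring_nf
  rw [key m] at hm
  exact (smul_eq_zero.mp hm).resolve_left (pow_ne_zero m (neg_ne_zero.mpr hsne))

lemma inj_fe (e f h : Module.End k V)
    (hch : Commute (casOp e f h) h) (χ μ : k) {x : V} (hx : x ∈ wt e f h χ μ)
    (h0 : f (e x) = 0) (hs : χ ≠ μ^2 + 2*μ) : x = 0 := by
  set s : k := χ - μ^2 - 2*μ with hsdef
  have hsne : s ≠ 0 := fun hzero => hs (by linear_combination hzero)
  obtain ⟨m, hm⟩ := nilp_on_wt e f h hch χ μ (2*μ+2) hx
  rw [identity_fe e f h] at hm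
  set X : Module.End k V := (4:k)•(f*e) - s•1 with hX
  have key : ∀ n, (X^n) x = ((-s)^n) • x := by
    intro n
    induction n with
    | zero => simp
    | succ n ih =>
      have hXx : X x = -(s • x) := by
        simp [hX, LinearMap.sub_apply, Module.End.mul_apply, h0]
      rw [pow_succ, Module.End.mul_apply, hXx, map_neg, map_smul, ih, pow_succ']
      rw [smul_smul, ← neg_smul]
      ring_nf
  rw [key m] at hm
  exact (smul_eq_zero.mp hm).resolve_left (pow_ne_zero m (neg_ne_zero.mpr hsne))

lemma top_step (e f h : Module.End k V)
    (h1 : h * e = e * h + (2:k) • e)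
    (h2 : h * f = f * h + (-2:k) • f)
    (h3 : e * f = f * e + h)
    (χ μ : k) (hne : wt e f h χ μ ≠ ⊥) (htop : wt e f h χ (μ+2) = ⊥) :
    χ = μ^2 + 2*μ := by
  by_contra hs
  obtain ⟨x, hx, hx0⟩ := Submodule.exists_mem_ne_zero_of_ne_bot hne
  have hex : e x ∈ wt e f h χ (μ+2) :=
    mapsTo_shift e f h (semiconj_e e h h1 μ) (comm_Ce e f h h1 h3) χ hx
  have hex0 : e x = 0 := by rw [htop] at hex; simpa using hex
  exact hx0 (inj_fe e f h (comm_Ch e f h h1 h2) χ μ hx (by rw [hex0]; simp) hs)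

lemma bot_step (e f h : Module.End k V)
    (h1 : h * e = e * h + (2:k) • e)
    (h2 : h * f = f * h + (-2:k) • f)
    (h3 : e * f = f * e + h)
    (χ μ : k) (hne : wt e f h χ μ ≠ ⊥) (hbot : wt e f h χ (μ-2) = ⊥) :
    χ = μ^2 - 2*μ := by
  by_contra hs
  obtain ⟨x, hx, hx0⟩ := Submodule.exists_mem_ne_zero_of_ne_bot hne
  have hfx : f x ∈ wt e f h χ (μ-2) :=
    mapsTo_shift e f h (semiconj_f f h h2 μ) (comm_Cf e f h h2 h3) χ hx
  have hfx0 : f x = 0 := by rw [hbot] at hfx; simpa using hfx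
  exact hx0 (inj_ef e f h h3 (comm_Ch e f h h1 h2) χ μ hx (by rw [hfx0]; simp) hs)

lemma wt_finite (e f h : Module.End k V) (χ : k) :
    {μ : k | wt e f h χ μ ≠ ⊥}.Finite := by
  apply (Module.End.finite_hasEigenvalue (f := h)).subset
  intro μ hμ
  have hmax : h.maxGenEigenspace μ ≠ ⊥ := by
    intro hbot
    exact hμ (by simp [wt, hbot])
  obtain ⟨x, hx, hx0⟩ := Submodule.exists_mem_ne_zero_of_ne_bot hmax
  obtain ⟨l, -, hl⟩ := Module.End.mem_genEigenspace.mp hx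
  have hgen : h.HasGenEigenvalue μ l :=
    Module.End.hasGenEigenvalue_iff.mpr (Submodule.ne_bot_iff _ |>.mpr
      ⟨x, Module.End.mem_genEigenspace_nat.mpr hl, hx0⟩)
  exact Module.End.hasEigenvalue_of_hasGenEigenvalue hgen

lemma exists_boundary {S : Set k} (hS : S.Finite) (g : ℕ → k)
    (hg : Function.Injective g) (h0 : g 0 ∈ S) :
    ∃ j, g j ∈ S ∧ g (j+1) ∉ S := by
  by_contra hcon
  push_neg at hcon
  have hall : ∀ j, g j ∈ S := by
    intro j
    induction j with
    | zero => exact h0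
    | succ n ih => exact hcon n ih
  exact (Set.infinite_of_injective_forall_mem hg hall) hS

variable [CharZero k]

lemma claim_star (e f h : Module.End k V)
    (h1 : h * e = e * h + (2:k) • e)
    (h2 : h * f = f * h + (-2:k) • f)
    (h3 : e * f = f * e + h)
    (χ μ : k) (hU : wt e f h χ μ ≠ ⊥) (hχ : χ = μ^2 - 2*μ) :
    wt e f h χ (μ - 2) = ⊥ := by
  by_contra hne
  set S : Set k := {ν : k | wt e f h χ ν ≠ ⊥} with hS
  have hSfin : S.Finite := wt_finite e f h χ
  -- downward chain from μ - 2
  have hdinj : Function.Injective (fun i : ℕ => μ - 2 - 2*(i:k)) := by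
    intro i j hij
    simp only at hij
    have hcast : (i:k) = j := by linear_combination hij / (-2)
    exact_mod_cast hcast
  obtain ⟨p, hp1, hp2⟩ := exists_boundary hSfin (fun i : ℕ => μ - 2 - 2*(i:k)) hdinj
    (by simpa [hS] using hne)
  set a : k := μ - 2 - 2*(p:k) with ha
  have hb2 : wt e f h χ (a - 2) = ⊥ := by
    have hx := hp2
    simp only [hS, Set.mem_setOf_eq, not_not] at hx
    rw [show μ - 2 - 2*(((p+1 : ℕ)):k) = a - 2 by push_cast; ring] at hx
    exact hx
  have hstep := bot_step e f h h1 h2 h3 χ a hp1 hb2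
  have hfac : (a - μ) * (a + μ - 2) = 0 := by
    linear_combination hχ - hstep
  have haμ : a + μ - 2 = 0 := by
    rcases mul_eq_zero.mp hfac with hcase | hcase
    · exfalso
      have hzz : ((2 + 2*p : ℕ) : k) = 0 := by push_cast; linear_combination -hcase
      exact Nat.cast_ne_zero.mpr (by omega) hzz
    · exact hcase
  have hmu1 : 2*μ = 4 + 2*(p:k) := by linear_combination haμ
  -- upward chain from μ
  have huinj : Function.Injective (fun i : ℕ => μ + 2*(i:k)) := by
    intro i j hij
    simp only at hij
    have hcast : (i:k) = j := by linear_combination hij / 2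
    exact_mod_cast hcast
  obtain ⟨q, hq1, hq2⟩ := exists_boundary hSfin (fun i : ℕ => μ + 2*(i:k)) huinj
    (by simpa [hS] using hU)
  set b : k := μ + 2*(q:k) with hb
  have hb3 : wt e f h χ (b + 2) = ⊥ := by
    have hx := hq2
    simp only [hS, Set.mem_setOf_eq, not_not] at hx
    rw [show μ + 2*(((q+1 : ℕ)):k) = b + 2 by push_cast; ring] at hx
    exact hx
  have hstep2 := top_step e f h h1 h2 h3 χ b hq1 hb3
  have hfac2 : (b - μ + 2) * (b + μ) = 0 := by
    linear_combination hχ - hstep2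
  have hbμ : b + μ = 0 := by
    rcases mul_eq_zero.mp hfac2 with hcase | hcase
    · exfalso
      have hzz : ((2 + 2*q : ℕ) : k) = 0 := by push_cast; linear_combination hcase
      exact Nat.cast_ne_zero.mpr (by omega) hzz
    · exact hcase
  have hmu2 : 2*μ = -(2*(q:k)) := by linear_combination hbμ
  have hfin : ((4 + 2*p + 2*q : ℕ) : k) = 0 := by push_cast; linear_combination hmu2 - hmu1
  exact Nat.cast_ne_zero.mpr (by omega) hfin

variable [IsAlgClosed k]

theorem disjoint_closed (e f h : Module.End k V)
    (he : h * e - e * h = (2 : k) • e)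
    (hf : h * f - f * h = (-2 : k) • f)
    (hef : e * f - f * e = h) :
    Disjoint (LinearMap.ker f) (LinearMap.range e) := by
  classical
  have h1 : h * e = e * h + (2:k) • e := by rw [← he]; abel
  have h2 : h * f = f * h + (-2:k) • f := by rw [← hf]; abel
  have h3 : e * f = f * e + h := by rw [← hef]; abel
  have hch : Commute (casOp e f h) h := comm_Ch e f h h1 h2
  have hce : Commute (casOp e f h) e := comm_Ce e f h h1 h3
  have hcf : Commute (casOp e f h) f := comm_Cf e f h h2 h3
  set F : Fin 2 → Module.End k V := ![casOp e f h, h] with hF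
  have hcomm : ∀ i j, Commute (F i) (F j) := by
    intro i j
    fin_cases i <;> fin_cases j <;>
      simp only [hF, Matrix.cons_val_zero, Matrix.cons_val_one, Matrix.head_cons] <;>
      (first
        | exact Commute.refl _
        | exact hch
        | exact hch.symm)
  set P : (Fin 2 → k) → Submodule k V :=
    fun χ => ⨅ i, (F i).maxGenEigenspace (χ i) with hP
  have hPle : ∀ χ : Fin 2 → k, P χ ≤ wt e f h (χ 0) (χ 1) := by
    intro χ
    exact le_inf (by simpa [hF] using iInf_le (fun i => (F i).maxGenEigenspace (χ i)) 0)
      (by simpa [hF] using iInf_le (fun i => (F i).maxGenEigenspace (χ i)) 1)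
  have hPge : ∀ χ : Fin 2 → k, wt e f h (χ 0) (χ 1) ≤ P χ := by
    intro χ
    refine le_iInf fun i => ?_
    fin_cases i
    · exact inf_le_left.trans (by simp [hF])
    · exact inf_le_right.trans (by simp [hF])
  have htop : ⨆ χ : Fin 2 → k, P χ = ⊤ :=
    Module.End.iSup_iInf_maxGenEigenspace_eq_top_of_iSup_maxGenEigenspace_eq_top_of_commute
      F (fun i j _ => hcomm i j) (fun i => Module.End.iSup_maxGenEigenspace_eq_top _)
  have hind : iSupIndep P :=
    Module.End.independent_iInf_maxGenEigenspace_of_forall_mapsTo F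
      (fun i j φ => Module.End.mapsTo_maxGenEigenspace_of_comm (hcomm j i) φ)
  rw [Submodule.disjoint_def]
  intro x hxker hxrange
  obtain ⟨y, rfl⟩ := hxrange
  rw [LinearMap.mem_ker] at hxker
  have hy : y ∈ ⨆ χ : Fin 2 → k, P χ := htop ▸ Submodule.mem_top
  obtain ⟨d, hd⟩ := (Submodule.mem_iSup_iff_exists_dfinsupp' P y).mp hy
  have hfe_mem : ∀ (χ : Fin 2 → k) (v : V), v ∈ P χ → f (e v) ∈ P χ := by
    intro χ v hv
    have hv' : v ∈ wt e f h (χ 0) (χ 1) := hPle χ hv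
    have h1' : e v ∈ wt e f h (χ 0) (χ 1 + 2) :=
      mapsTo_shift e f h (semiconj_e e h h1 (χ 1)) hce (χ 0) hv'
    have h2' : f (e v) ∈ wt e f h (χ 0) (χ 1 + 2 - 2) :=
      mapsTo_shift e f h (semiconj_f f h h2 (χ 1 + 2)) hcf (χ 0) h1'
    refine hPge χ ?_
    rw [show χ 1 + 2 - 2 = χ 1 by ring] at h2'
    exact h2'
  set d' : Π₀ χ : Fin 2 → k, ↥(P χ) :=
    DFinsupp.mapRange (fun χ (v : ↥(P χ)) => (⟨f (e (v : V)), hfe_mem χ _ v.2⟩ : ↥(P χ)))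
      (fun χ => by apply Subtype.ext; simp) d with hd'
  have hsum' : (DFinsupp.lsum ℕ (fun χ => (P χ).subtype)) d' = 0 := by
    have hls : (DFinsupp.lsum ℕ (fun χ => (P χ).subtype)) d' =
        d'.sum (fun χ v => (v : V)) := by
      rw [DFinsupp.lsum_apply_apply, DFinsupp.sumAddHom_apply]
      rfl
    rw [hls, hd', DFinsupp.sum_mapRange_index (by intro i; rfl)]
    have hfey : (d.sum fun χ (v : ↥(P χ)) => f (e (v : V))) = f (e y) := by
      rw [← hd, map_dfinsuppSum, map_dfinsuppSum]
    rw [hfey, hxker]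
  have hT : Function.Injective (DFinsupp.lsum ℕ (fun χ => (P χ).subtype)) :=
    (iSupIndep_iff_dfinsupp_lsum_injective P).mp hind
  have hd'0 : d' = 0 := hT (by rw [hsum']; simp)
  have hcomp : ∀ χ : Fin 2 → k, f (e ((d χ : V))) = 0 := by
    intro χ
    have hc := congrFun (congrArg DFunLike.coe hd'0) χ
    rw [hd'] at hc
    simpa [DFinsupp.mapRange_apply, Subtype.ext_iff] using hc
  have hzero : ∀ χ : Fin 2 → k, e ((d χ : V)) = 0 := by
    intro χ
    by_contra hne
    have hmem : e ((d χ : V)) ∈ wt e f h (χ 0) (χ 1 + 2) :=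
      mapsTo_shift e f h (semiconj_e e h h1 (χ 1)) hce (χ 0) (hPle χ (d χ).2)
    have hUne : wt e f h (χ 0) (χ 1 + 2) ≠ ⊥ :=
      Submodule.ne_bot_iff _ |>.mpr ⟨_, hmem, hne⟩
    have hval : χ 0 = (χ 1 + 2)^2 - 2*(χ 1 + 2) := by
      by_contra hsne
      exact hne (inj_ef e f h h3 hch (χ 0) (χ 1 + 2) hmem (by rw [hcomp χ]; simp) hsne)
    have hbot := claim_star e f h h1 h2 h3 (χ 0) (χ 1 + 2) hUne hval
    rw [show χ 1 + 2 - 2 = χ 1 by ring] at hbot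
    have hdz : (d χ : V) = 0 := by
      have hmm : (d χ : V) ∈ wt e f h (χ 0) (χ 1) := hPle χ (d χ).2
      rw [hbot] at hmm
      simpa using hmm
    rw [hdz] at hne
    exact hne (map_zero e)
  have hey : e y = 0 := by
    rw [← hd, map_dfinsuppSum]
    exact DFinsupp.sum_eq_zero (fun χ => hzero χ)
  exact hey

end fd

section transfer

open TensorProduct

variable {K W : Type*} [Field K] [CharZero K] [AddCommGroup W] [Module K W]
  [FiniteDimensional K W]

/-- Disjointness of `ker f` and `range e`, over an arbitrary field of characteristic zero,
obtained by base change to the algebraic closure. -/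
lemma disjoint_ker_range (e f h : Module.End K W)
    (he : h * e - e * h = (2 : K) • e)
    (hf : h * f - f * h = (-2 : K) • f)
    (hef : e * f - f * e = h) :
    Disjoint (LinearMap.ker f) (LinearMap.range e) := by
  classical
  set L := AlgebraicClosure K with hL
  letI : CharZero L := charZero_of_injective_algebraMap (algebraMap K L).injective
  set eL : Module.End L (L ⊗[K] W) := LinearMap.baseChange L e with heLdef
  set fL : Module.End L (L ⊗[K] W) := LinearMap.baseChange L f with hfLdef
  set hL' : Module.End L (L ⊗[K] W) := LinearMap.baseChange L h with hhLdef
  -- transfer the relations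
  have he2 : h * e - e * h = e + e := by rw [he, two_smul]
  have hf2 : h * f - f * h = -(f + f) := by rw [hf]; rw [show ((-2:K))•f = -(f+f) by
    rw [neg_smul, two_smul]]
  have heL : hL' * eL - eL * hL' = (2:L) • eL := by
    have hc := congrArg (LinearMap.baseChange L) he2
    rw [LinearMap.baseChange_sub, LinearMap.baseChange_add, LinearMap.baseChange_mul,
      LinearMap.baseChange_mul] at hc
    rw [two_smul]
    exact hc
  have hfL : hL' * fL - fL * hL' = (-2:L) • fL := by
    have hc := congrArg (LinearMap.baseChange L) hf2
    rw [LinearMap.baseChange_sub, LinearMap.baseChange_neg, LinearMap.baseChange_add,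
      LinearMap.baseChange_mul, LinearMap.baseChange_mul] at hc
    rw [show ((-2:L))•fL = -(fL+fL) by module]
    exact hc
  have hefL : eL * fL - fL * eL = hL' := by
    have hc := congrArg (LinearMap.baseChange L) hef
    rw [LinearMap.baseChange_sub, LinearMap.baseChange_mul, LinearMap.baseChange_mul] at hc
    exact hc
  have hdisjL : Disjoint (LinearMap.ker fL) (LinearMap.range eL) :=
    disjoint_closed eL fL hL' heL hfL hefL
  rw [Submodule.disjoint_def]
  intro x hker hrange
  obtain ⟨u, hu⟩ := hrange
  have h1 : (1:L) ⊗ₜ[K] x ∈ LinearMap.ker fL := by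
    rw [LinearMap.mem_ker, hfLdef, LinearMap.baseChange_tmul, LinearMap.mem_ker.mp hker,
      TensorProduct.tmul_zero]
  have h2 : (1:L) ⊗ₜ[K] x ∈ LinearMap.range eL :=
    ⟨(1:L) ⊗ₜ[K] u, by rw [heLdef, LinearMap.baseChange_tmul, hu]⟩
  have h0 : (1:L) ⊗ₜ[K] x = 0 := Submodule.disjoint_def.mp hdisjL _ h1 h2
  -- injectivity of v ↦ 1 ⊗ v
  have hrt := Module.Flat.rTensor_preserves_injective_linearMap (M := W)
    (Algebra.linearMap K L) (fun a b hab => by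
      exact (algebraMap K L).injective (by simpa [Algebra.linearMap_apply] using hab))
  have h5 : (1:K) ⊗ₜ[K] x = ((0 : K ⊗[K] W)) := by
    apply hrt
    rw [map_zero]
    have : (LinearMap.rTensor W (Algebra.linearMap K L)) ((1:K) ⊗ₜ[K] x)
        = (algebraMap K L 1) ⊗ₜ[K] x := LinearMap.rTensor_tmul _ _ _ _
    rw [this, map_one, h0]
  have h6 := congrArg (TensorProduct.lid K W) h5
  simpa using h6

end transfer

end Sl2Aux

/-- Let `V` be a finite-dimensional representation of the Lie algebra
`sl₂` over a field of characteristic zero, given by linear endomorphisms `e`, `f`, `h`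
of `V` satisfying the `sl₂` relations `[h,e] = 2e`, `[h,f] = -2f`, `[e,f] = h`.
Then `V = ker f ⊕ im e`. -/
theorem sl2_ker_f_compl_range_e
    {K V : Type*} [Field K] [CharZero K] [AddCommGroup V] [Module K V]
    [FiniteDimensional K V]
    (e f h : Module.End K V)
    (he : h * e - e * h = (2 : K) • e)
    (hf : h * f - f * h = (-2 : K) • f)
    (hef : e * f - f * e = h) :
    IsCompl (LinearMap.ker f) (LinearMap.range e) := by
  have d1 : Disjoint (LinearMap.ker f) (LinearMap.range e) :=
    Sl2Aux.disjoint_ker_range e f h he hf hef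
  -- the swapped triple (f, e, -h)
  have he' : (-h) * f - f * (-h) = (2:K) • f := by
    have : (-h) * f - f * (-h) = -(h * f - f * h) := by
      rw [neg_mul, mul_neg]; abel
    rw [this, hf, neg_smul, neg_neg]
  have hf' : (-h) * e - e * (-h) = (-2:K) • e := by
    have : (-h) * e - e * (-h) = -(h * e - e * h) := by
      rw [neg_mul, mul_neg]; abel
    rw [this, he, neg_smul]
  have hef' : f * e - e * f = -h := by rw [← hef]; abel
  have d2 : Disjoint (LinearMap.ker e) (LinearMap.range f) :=
    Sl2Aux.disjoint_ker_range f e (-h) he' hf' hef'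
  -- dimension count
  have hrn_e := LinearMap.finrank_range_add_finrank_ker e
  have hrn_f := LinearMap.finrank_range_add_finrank_ker f
  have hsup1 := Submodule.finrank_sup_add_finrank_inf_eq (LinearMap.ker f) (LinearMap.range e)
  have hsup2 := Submodule.finrank_sup_add_finrank_inf_eq (LinearMap.ker e) (LinearMap.range f)
  rw [disjoint_iff.mp d1, finrank_bot, add_zero] at hsup1
  rw [disjoint_iff.mp d2, finrank_bot, add_zero] at hsup2
  have hle1 : finrank K ↥(LinearMap.ker f ⊔ LinearMap.range e) ≤ finrank K V :=
    Submodule.finrank_le _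
  have hle2 : finrank K ↥(LinearMap.ker e ⊔ LinearMap.range f) ≤ finrank K V :=
    Submodule.finrank_le _
  have heq : finrank K ↥(LinearMap.ker f ⊔ LinearMap.range e) = finrank K V := by omega
  exact ⟨d1, codisjoint_iff.mpr (Submodule.eq_top_of_finrank_eq heq)⟩
end

section
/- Let A = ⊕_{i∈ℤ} A^i be a finite-dimensional ℤ-graded vector space over a field of characteristic zero (with A^i = 0 for all but finitely many i), equipped with a degree-2 linear map e: A^i → A^{i+2} such that for every i ≥ 0 the map e^i: A^{-i} → A^i is an isomorphism. Define h: A → A by h|_{A^i} = i·id. Then there exists a unique degree-(-2) linear map f: A^i → A^{i-2} such that (e, f, h) satisfy the sl2 relations [h,e]=2e, [h,f]=-2f, [e,f]=h. -/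
open Module Submodule

private lemma hl_tele (a d : ℕ → ℤ) (hd : ∀ i, d i + a (i + 2) = a i) : ∀ n : ℕ,
    (∑ i ∈ Finset.range (n + 1), ((i : ℤ) + 1) * d i) + n * a (n + 1) + (n + 1) * a (n + 2)
      + a 0 = 2 * ∑ i ∈ Finset.range (n + 1), a i := by
  intro n
  induction n with
  | zero => simp [Finset.sum_range_one]; linarith [hd 0]
  | succ n ih =>
      rw [Finset.sum_range_succ, Finset.sum_range_succ (f := fun i => a i)]
      push_cast at ih ⊢
      linear_combination ih + ((n : ℤ) + 2) * hd (n + 1)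

set_option maxHeartbeats 2000000

/-- Let `A = ⊕ᵢ Aⁱ` be a finite-dimensional `ℤ`-graded vector space over a
field of characteristic zero, with a degree-`2` linear map `e` (`e : Aⁱ → Aⁱ⁺²`) such that
for every `i ≥ 0` the map `eⁱ : A⁻ⁱ → Aⁱ` is an isomorphism (hard Lefschetz condition).
Let `h` act by `i · id` on `Aⁱ`.  Then there is a unique degree-`(-2)` linear map `f`
such that `(e, f, h)` satisfy the `sl₂` relations `[h,e] = 2e`, `[h,f] = -2f`, `[e,f] = h`. -/
theorem hard_lefschetz_unique_sl2_f
    {K A : Type*} [Field K] [CharZero K] [AddCommGroup A] [Module K A]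
    [FiniteDimensional K A]
    (𝒜 : ℤ → Submodule K A) (hgr : DirectSum.IsInternal 𝒜)
    (e : Module.End K A)
    (hdeg : ∀ i : ℤ, (𝒜 i).map e ≤ 𝒜 (i + 2))
    (hHL : ∀ i : ℕ,
      Submodule.map (e ^ i : Module.End K A) (𝒜 (-(i : ℤ))) = 𝒜 (i : ℤ) ∧
      Disjoint (LinearMap.ker (e ^ i : Module.End K A)) (𝒜 (-(i : ℤ))))
    (h : Module.End K A)
    (hh : ∀ i : ℤ, ∀ x ∈ 𝒜 i, h x = (i : K) • x) :
    ∃! f : Module.End K A,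
      (∀ i : ℤ, (𝒜 i).map f ≤ 𝒜 (i - 2)) ∧
      h * e - e * h = (2 : K) • e ∧
      h * f - f * h = (-2 : K) • f ∧
      e * f - f * e = h := by
  classical
  -- step up by e preserves degrees
  have hdeg' : ∀ (m : ℤ) (x : A), x ∈ 𝒜 m → e x ∈ 𝒜 (m + 2) := fun m x hx =>
    hdeg m ⟨x, hx, rfl⟩
  have hpow : ∀ (k : ℕ) (m : ℤ) (x : A), x ∈ 𝒜 m → (e ^ k) x ∈ 𝒜 (m + 2 * k) := by
    intro k
    induction k with
    | zero => intro m x hx; simpa using hx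
    | succ k ih =>
        intro m x hx
        have h1 : (e ^ (k + 1)) x = e ((e ^ k) x) := by
          rw [pow_succ']; rfl
        have h2 := hdeg' _ _ (ih m x hx)
        rw [h1]
        convert h2 using 2
        push_cast; ring
  have hinj : ∀ (i k : ℕ), k ≤ i → ∀ x ∈ 𝒜 (-(i : ℤ)), (e ^ k) x = 0 → x = 0 := by
    intro i k hk x hx hz
    refine Submodule.disjoint_def.mp (hHL i).2 x ?_ hx
    have hik : e ^ i = e ^ (i - k) * e ^ k := by rw [← pow_add]; congr 1; omega
    rw [LinearMap.mem_ker, hik, Module.End.mul_apply, hz, map_zero]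
  -- bound on support
  have hfin : {m : ℤ | 𝒜 m ≠ ⊥}.Finite :=
    WellFoundedGT.finite_ne_bot_of_iSupIndep hgr.submodule_iSupIndep
  obtain ⟨N, hN⟩ : ∃ N : ℕ, ∀ m : ℤ, (N : ℤ) < |m| → 𝒜 m = ⊥ := by
    refine ⟨hfin.toFinset.sup Int.natAbs, fun m hm => ?_⟩
    by_contra hne
    have h1 : m ∈ hfin.toFinset := by simpa using hne
    have h2 := Finset.le_sup (f := Int.natAbs) h1
    rw [Int.abs_eq_natAbs] at hm
    omega
  -- primitive subspaces
  set P : ℕ → Submodule K A := fun i => 𝒜 (-(i : ℤ)) ⊓ LinearMap.ker (e ^ (i + 1)) with hPdef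
  -- splitting of 𝒜 (-i)
  have hsplit : ∀ (i : ℕ), ∀ x ∈ 𝒜 (-(i : ℤ)),
      ∃ p ∈ P i, ∃ y ∈ 𝒜 (-(i : ℤ) - 2), x = p + e y := by
    intro i x hx
    have h1 : (e ^ (i + 1)) x ∈ 𝒜 ((i : ℤ) + 2) := by
      have := hpow (i + 1) _ _ hx
      convert this using 2
      push_cast; ring
    have h2 : (e ^ (i + 1)) x ∈ Submodule.map (e ^ (i + 2)) (𝒜 (-((i + 2 : ℕ) : ℤ))) := by
      rw [(hHL (i + 2)).1, show ((i + 2 : ℕ) : ℤ) = (i : ℤ) + 2 by push_cast; ring]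
      exact h1
    obtain ⟨y, hy, hye⟩ := h2
    have hy' : y ∈ 𝒜 (-(i : ℤ) - 2) := by
      rw [show -(i : ℤ) - 2 = -((i + 2 : ℕ) : ℤ) by push_cast; ring]
      exact hy
    refine ⟨x - e y, Submodule.mem_inf.mpr ⟨?_, ?_⟩, y, hy', by abel⟩
    · have hey : e y ∈ 𝒜 (-(i : ℤ)) := by
        have := hdeg' _ _ hy'
        convert this using 2; ring
      exact sub_mem hx hey
    · rw [LinearMap.mem_ker, map_sub]
      have : (e ^ (i + 1)) (e y) = (e ^ (i + 2)) y := by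
        rw [show e ^ (i + 2) = e ^ (i + 1) * e by rw [← pow_succ]]
        rfl
      rw [this, hye, sub_self]
  -- dimension bookkeeping
  set a : ℕ → ℕ := fun i => finrank K (𝒜 (-(i : ℤ))) with hadef
  set d : ℕ → ℕ := fun i => finrank K (P i) with hddef
  have hrank : ∀ i : ℕ, d i + a (i + 2) = a i := by
    intro i
    have hmem : ∀ z : (P i) × (𝒜 (-(i : ℤ) - 2)),
        (z.1 : A) + e (z.2 : A) ∈ 𝒜 (-(i : ℤ)) := by
      rintro ⟨p, y⟩
      refine add_mem (Submodule.mem_inf.mp p.2).1 ?_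
      have := hdeg' _ _ y.2
      convert this using 2; ring
    let φ : (P i) × (𝒜 (-(i : ℤ) - 2)) →ₗ[K] (𝒜 (-(i : ℤ))) :=
      LinearMap.codRestrict _
        (((P i).subtype.comp (LinearMap.fst K _ _))
          + ((e ∘ₗ (𝒜 (-(i : ℤ) - 2)).subtype).comp (LinearMap.snd K _ _))) hmem
    have hφ : Function.Bijective φ := by
      constructor
      · rw [← LinearMap.ker_eq_bot, eq_bot_iff]
        rintro ⟨p, y⟩ hz
        have hz' : (p : A) + e (y : A) = 0 := congrArg Subtype.val hz
        have hpk : (e ^ (i + 1)) (p : A) = 0 := (Submodule.mem_inf.mp p.2).2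
        have hy0 : (y : A) = 0 := by
          refine hinj (i + 2) (i + 2) le_rfl (y : A) ?_ ?_
          · rw [show -((i + 2 : ℕ) : ℤ) = -(i : ℤ) - 2 by push_cast; ring]
            exact y.2
          · have : (e ^ (i + 2)) (y : A) = (e ^ (i + 1)) ((p : A) + e (y : A)) := by
              rw [map_add, hpk, zero_add,
                show e ^ (i + 2) = e ^ (i + 1) * e by rw [← pow_succ]]
              rfl
            rw [this, hz', map_zero]
        have hp0 : (p : A) = 0 := by
          have := hz'
          rw [hy0, map_zero, add_zero] at this
          exact this
        refine Submodule.mem_bot _ |>.mpr ?_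
        exact Prod.ext (Subtype.ext hp0) (Subtype.ext hy0)
      · rintro ⟨x, hx⟩
        obtain ⟨p, hp, y, hy, hxe⟩ := hsplit i x hx
        exact ⟨(⟨p, hp⟩, ⟨y, hy⟩), Subtype.ext hxe.symm⟩
    have := (LinearEquiv.ofBijective φ hφ).finrank_eq
    rw [Module.finrank_prod] at this
    rw [hddef, hadef]
    simp only []
    rw [show (-((i + 2 : ℕ) : ℤ)) = -(i : ℤ) - 2 by push_cast; ring]
    exact this
  -- finrank symmetry
  have hsymm : ∀ n : ℕ, finrank K (𝒜 (n : ℤ)) = a n := by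
    intro n
    have hmem : ∀ y : 𝒜 (-(n : ℤ)), (e ^ n) (y : A) ∈ 𝒜 (n : ℤ) := by
      intro y
      have := hpow n _ _ y.2
      convert this using 2; push_cast; ring
    let ψ : (𝒜 (-(n : ℤ))) →ₗ[K] (𝒜 (n : ℤ)) :=
      LinearMap.codRestrict _ ((e ^ n).domRestrict (𝒜 (-(n : ℤ)))) hmem
    have hψ : Function.Bijective ψ := by
      constructor
      · intro y z hyz
        have : (e ^ n) (y : A) = (e ^ n) (z : A) := congrArg Subtype.val hyz
        have h0 : (e ^ n) ((y : A) - (z : A)) = 0 := by rw [map_sub, this, sub_self]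
        have := hinj n n le_rfl _ (sub_mem y.2 z.2) h0
        exact Subtype.ext (sub_eq_zero.mp this)
      · rintro ⟨x, hx⟩
        rw [← (hHL n).1] at hx
        obtain ⟨y, hy, hyx⟩ := hx
        exact ⟨⟨y, hy⟩, Subtype.ext hyx⟩
    exact ((LinearEquiv.ofBijective ψ hψ).finrank_eq).symm
  have habot : ∀ i : ℕ, N < i → 𝒜 (-(i : ℤ)) = ⊥ := by
    intro i hi
    refine hN _ ?_
    rw [abs_neg, Int.abs_natCast]
    exact_mod_cast hi
  have haN : ∀ i : ℕ, N < i → a i = 0 := by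
    intro i hi
    rw [hadef]; simp only []
    rw [habot i hi]
    exact finrank_bot K A
  have hPbot : ∀ i : ℕ, N < i → P i = ⊥ := by
    intro i hi
    rw [eq_bot_iff]
    exact le_trans inf_le_left (habot i hi).le
  -- the index type and candidate basis vectors
  let ι := Σ i : Fin (N + 1), Fin ((i : ℕ) + 1) × Fin (d (i : ℕ))
  let bP : ∀ i : ℕ, Basis (Fin (d i)) K (P i) := fun i => Module.finBasis K (P i)
  let v : ι → A := fun t => (e ^ (t.2.1 : ℕ)) ((bP t.1 t.2.2 : A))
  have hcard : Fintype.card ι = ∑ i ∈ Finset.range (N + 1), (i + 1) * d i := by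
    rw [Fintype.card_sigma, ← Fin.sum_univ_eq_sum_range]
    congr 1
    funext i
    rw [Fintype.card_prod, Fintype.card_fin, Fintype.card_fin]
  have hcount : (Fintype.card ι : ℤ) + (a 0 : ℤ)
      = 2 * ∑ i ∈ Finset.range (N + 1), (a i : ℤ) := by
    have ht := hl_tele (fun i => (a i : ℤ)) (fun i => (d i : ℤ))
      (fun i => by show (d i : ℤ) + (a (i + 2) : ℤ) = (a i : ℤ); exact_mod_cast hrank i) N
    have z1 : a (N + 1) = 0 := haN _ (by omega)
    have z2 : a (N + 2) = 0 := haN _ (by omega)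
    rw [z1, z2] at ht
    rw [hcard]
    push_cast at ht ⊢
    linarith [ht]
  -- lower bound for finrank via collected basis
  let cB := hgr.collectedBasis (fun m => Module.finBasis K (𝒜 m))
  let J := (Σ i : Fin (N + 1), Fin (a (i : ℕ)))
    ⊕ (Σ i : Fin N, Fin (finrank K (𝒜 (((i : ℕ) : ℤ) + 1))))
  let ψ : J → Σ m : ℤ, Fin (finrank K (𝒜 m)) := fun t =>
    match t with
    | Sum.inl ⟨i, j⟩ => ⟨-((i : ℕ) : ℤ), j⟩
    | Sum.inr ⟨i, j⟩ => ⟨((i : ℕ) : ℤ) + 1, j⟩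
  have hψ : Function.Injective ψ := by
    rintro (⟨i1, j1⟩ | ⟨i1, j1⟩) (⟨i2, j2⟩ | ⟨i2, j2⟩) heq <;>
      simp only [ψ, Sigma.ext_iff] at heq
    · obtain ⟨hm, hj⟩ := heq
      have hi : i1 = i2 := by
        ext
        omega
      subst hi
      rw [heq_iff_eq] at hj
      subst hj
      rfl
    · exfalso
      obtain ⟨hm, -⟩ := heq
      omega
    · exfalso
      obtain ⟨hm, -⟩ := heq
      omega
    · obtain ⟨hm, hj⟩ := heq
      have hi : i1 = i2 := by
        ext
        omega
      subst hi
      rw [heq_iff_eq] at hj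
      subst hj
      rfl
  have hJle : Fintype.card J ≤ finrank K A :=
    (cB.linearIndependent.comp ψ hψ).fintype_card_le_finrank
  have hJcard : Fintype.card J
      = (∑ i ∈ Finset.range (N + 1), a i) + ∑ i ∈ Finset.range N, a (i + 1) := by
    have h2 : ∀ i : Fin N, finrank K (𝒜 (((i : ℕ) : ℤ) + 1)) = a ((i : ℕ) + 1) := fun i => by
      rw [show (((i : ℕ) : ℤ) + 1) = (((i : ℕ) + 1 : ℕ) : ℤ) by push_cast; ring]
      exact hsymm _
    rw [Fintype.card_sum, Fintype.card_sigma, Fintype.card_sigma]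
    simp only [Fintype.card_fin]
    rw [Finset.sum_congr rfl (fun i _ => h2 i),
      Fin.sum_univ_eq_sum_range (fun i => a i),
      Fin.sum_univ_eq_sum_range (fun i => a (i + 1))]
  have hcardle : Fintype.card ι ≤ finrank K A := by
    have hs : ∑ i ∈ Finset.range (N + 1), a i
        = (∑ i ∈ Finset.range N, a (i + 1)) + a 0 := Finset.sum_range_succ' a N
    have : ((Fintype.card J : ℕ) : ℤ) ≤ (finrank K A : ℤ) := by exact_mod_cast hJle
    rw [hJcard] at this
    push_cast at this
    have h2 : ((Fintype.card ι : ℕ) : ℤ) ≤ (finrank K A : ℤ) := by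
      have hs' : (∑ i ∈ Finset.range (N + 1), (a i : ℤ))
          = (∑ i ∈ Finset.range N, (a (i + 1) : ℤ)) + a 0 := by exact_mod_cast hs
      linarith [hcount]
    exact_mod_cast h2
  -- the span of the candidate vectors
  set S : Submodule K A := Submodule.span K (Set.range v) with hSdef
  have hvS : ∀ t : ι, v t ∈ S := fun t => Submodule.subset_span ⟨t, rfl⟩
  have hbPk : ∀ (i : ℕ) (j : Fin (d i)), (e ^ (i + 1)) ((bP i j : A)) = 0 := fun i j =>
    (Submodule.mem_inf.mp (bP i j).2).2
  have heS : ∀ x ∈ S, e x ∈ S := by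
    intro x hx
    induction hx using Submodule.span_induction with
    | mem y hy =>
        obtain ⟨⟨i, k, j⟩, rfl⟩ := hy
        have hev : e (v ⟨i, k, j⟩) = (e ^ ((k : ℕ) + 1)) ((bP (i : ℕ) j : A)) := by
          rw [pow_succ']; rfl
        by_cases hk : (k : ℕ) < (i : ℕ)
        · have : e (v ⟨i, k, j⟩) = v ⟨i, ⟨(k : ℕ) + 1, by omega⟩, j⟩ := hev
          rw [this]; exact hvS _
        · have hki : (k : ℕ) = (i : ℕ) := by omega
          rw [hev, hki, hbPk]
          exact Submodule.zero_mem S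
    | zero => rw [map_zero]; exact Submodule.zero_mem S
    | add x y _ _ hx hy => rw [map_add]; exact add_mem hx hy
    | smul c x _ hx => rw [map_smul]; exact Submodule.smul_mem _ _ hx
  have hpowS : ∀ (k : ℕ), ∀ x ∈ S, (e ^ k) x ∈ S := by
    intro k
    induction k with
    | zero => intro x hx; simpa using hx
    | succ k ih =>
        intro x hx
        have : (e ^ (k + 1)) x = e ((e ^ k) x) := by rw [pow_succ']; rfl
        rw [this]
        exact heS _ (ih x hx)
  have hPS : ∀ i : ℕ, P i ≤ S := by
    intro i
    by_cases hi : i ≤ N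
    · intro x hx
      have hx' : (⟨x, hx⟩ : P i) = ∑ j, (bP i).repr ⟨x, hx⟩ j • bP i j :=
        ((bP i).sum_repr _).symm
      have hxc : x = ∑ j, (bP i).repr ⟨x, hx⟩ j • (bP i j : A) := by
        have := congrArg (Subtype.val) hx'
        exact this.trans (by simp only [Submodule.coe_sum, Submodule.coe_smul])
      rw [hxc]
      refine Submodule.sum_mem _ (fun j _ => Submodule.smul_mem _ _ ?_)
      have := hvS ⟨⟨i, by omega⟩, ⟨0, by omega⟩, j⟩
      simpa [v] using this
    · intro x hx
      rw [hPbot i (by omega)] at hx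
      simp only [Submodule.mem_bot] at hx
      rw [hx]; exact Submodule.zero_mem S
  have hdesc : ∀ g : ℕ, ∀ i : ℕ, N + 1 ≤ i + 2 * g → 𝒜 (-(i : ℤ)) ≤ S := by
    intro g
    induction g with
    | zero => intro i hi; rw [habot i (by omega)]; exact bot_le
    | succ g ih =>
        intro i hi x hx
        obtain ⟨p, hp, y, hy, rfl⟩ := hsplit i x hx
        have hy' : y ∈ 𝒜 (-((i + 2 : ℕ) : ℤ)) := by
          rw [show -((i + 2 : ℕ) : ℤ) = -(i : ℤ) - 2 by push_cast; ring]
          exact hy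
        have hyS : y ∈ S := ih (i + 2) (by omega) hy'
        exact add_mem (hPS i hp) (heS y hyS)
  have hAS : ∀ m : ℤ, 𝒜 m ≤ S := by
    intro m
    rcases le_or_gt m 0 with hm | hm
    · have hmeq : m = -(((-m).toNat : ℕ) : ℤ) := by omega
      rw [hmeq]
      exact hdesc (N + 1) _ (by omega)
    · intro x hx
      have hmn : ((m.toNat : ℕ) : ℤ) = m := by omega
      rw [← hmn, ← (hHL m.toNat).1] at hx
      obtain ⟨y, hy, rfl⟩ := hx
      exact hpowS _ _ (hdesc (N + 1) m.toNat (by omega) hy)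
  have hS : S = ⊤ := by
    rw [eq_top_iff, ← hgr.submodule_iSup_eq_top]
    exact iSup_le hAS
  have hfc : Fintype.card ι = finrank K A :=
    le_antisymm hcardle (finrank_le_of_span_eq_top hS)
  have hli : LinearIndependent K v := by
    rw [linearIndependent_iff_card_eq_finrank_span, Set.finrank, ← hSdef, hS, finrank_top]
    exact hfc
  let B : Basis ι K A := Basis.mk hli (by rw [← hSdef, hS])
  have hB : ∀ t, B t = v t := fun t => by rw [Basis.coe_mk]
  -- candidate operator f
  let w : ι → A := fun t => (((t.2.1 : ℕ) : K) * (((t.1 : ℕ) : K) + 1 - ((t.2.1 : ℕ) : K)))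
    • (e ^ ((t.2.1 : ℕ) - 1)) ((bP (t.1 : ℕ) t.2.2 : A))
  let f : Module.End K A := B.constr K w
  have hfv : ∀ t : ι, f (v t) = w t := by
    intro t
    have := B.constr_basis K w t
    rwa [hB] at this
  have hbdeg : ∀ (i : ℕ) (j : Fin (d i)), ((bP i j : A)) ∈ 𝒜 (-(i : ℤ)) := fun i j =>
    (Submodule.mem_inf.mp (bP i j).2).1
  have hvdeg : ∀ t : ι, v t ∈ 𝒜 (2 * ((t.2.1 : ℕ) : ℤ) - ((t.1 : ℕ) : ℤ)) := by
    rintro ⟨i, k, j⟩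
    have := hpow (k : ℕ) _ _ (hbdeg (i : ℕ) j)
    rw [show -((i : ℕ) : ℤ) + 2 * ((k : ℕ) : ℤ)
      = 2 * ((k : ℕ) : ℤ) - ((i : ℕ) : ℤ) by ring] at this
    exact this
  have hwdeg : ∀ t : ι, w t ∈ 𝒜 (2 * ((t.2.1 : ℕ) : ℤ) - ((t.1 : ℕ) : ℤ) - 2) := by
    rintro ⟨i, k, j⟩
    rcases Nat.eq_zero_or_pos (k : ℕ) with hk | hk
    · show ((((k : ℕ) : K) * _) • _) ∈ _
      rw [hk]
      simp
    · refine Submodule.smul_mem _ _ ?_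
      have := hpow ((k : ℕ) - 1) _ _ (hbdeg (i : ℕ) j)
      rw [show -((i : ℕ) : ℤ) + 2 * (((k : ℕ) - 1 : ℕ) : ℤ)
        = 2 * ((k : ℕ) : ℤ) - ((i : ℕ) : ℤ) - 2 by omega] at this
      exact this
  -- projections onto graded pieces
  let eqv := LinearEquiv.ofBijective (DirectSum.coeLinearMap 𝒜) hgr
  let π : ℤ → A → A := fun m x => ((eqv.symm x) m : A)
  have hπ_same : ∀ (m : ℤ) (x : A), x ∈ 𝒜 m → π m x = x := fun m x hx =>
    congrArg Subtype.val (hgr.ofBijective_coeLinearMap_of_mem hx)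
  have hπ_ne : ∀ (m m' : ℤ) (x : A), x ∈ 𝒜 m' → m' ≠ m → π m x = 0 := fun m m' x hx hne =>
    congrArg Subtype.val (hgr.ofBijective_coeLinearMap_of_mem_ne hne hx)
  -- graded pieces are spanned by the basis vectors of matching degree
  let W : ℤ → Submodule K A := fun m =>
    Submodule.span K (v '' {t : ι | 2 * ((t.2.1 : ℕ) : ℤ) - ((t.1 : ℕ) : ℤ) = m})
  have hWA : ∀ m : ℤ, W m ≤ 𝒜 m := by
    intro m
    refine Submodule.span_le.mpr ?_
    rintro x ⟨t, ht, rfl⟩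
    have := hvdeg t
    rwa [ht] at this
  have htopW : (⊤ : Submodule K A) ≤ ⨆ m : ℤ, W m := by
    rw [← hS]
    refine Submodule.span_le.mpr ?_
    rintro x ⟨t, rfl⟩
    refine Submodule.mem_iSup_of_mem (2 * ((t.2.1 : ℕ) : ℤ) - ((t.1 : ℕ) : ℤ)) ?_
    exact Submodule.subset_span ⟨t, rfl, rfl⟩
  have hAW : ∀ m : ℤ, 𝒜 m ≤ W m := by
    intro m x hx
    have hxt : x ∈ ⨆ m' : ℤ, W m' := htopW trivial
    have hπx : π m x ∈ W m := by
      refine Submodule.iSup_induction (motive := fun y => π m y ∈ W m) W hxt ?_ ?_ ?_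
      · intro m' y hy
        rcases eq_or_ne m' m with rfl | hne
        · rw [hπ_same m' y (hWA m' hy)]
          exact hy
        · rw [hπ_ne m m' y (hWA m' hy) hne]
          exact Submodule.zero_mem _
      · show π m 0 ∈ W m
        have : π m (0 : A) = 0 := by simp [π]
        rw [this]; exact Submodule.zero_mem _
      · intro y z hy hz
        have : π m (y + z) = π m y + π m z := by simp [π]
        rw [this]; exact add_mem hy hz
    rwa [hπ_same m x hx] at hπx
  have hfdeg : ∀ m : ℤ, ∀ x ∈ 𝒜 m, f x ∈ 𝒜 (m - 2) := by
    intro m x hx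
    have hxW := hAW m hx
    clear hx
    induction hxW using Submodule.span_induction with
    | mem y hy =>
        obtain ⟨t, ht, rfl⟩ := hy
        rw [hfv]
        have := hwdeg t
        rwa [ht] at this
    | zero => rw [map_zero]; exact Submodule.zero_mem _
    | add y z _ _ hy hz => rw [map_add]; exact add_mem hy hz
    | smul c y _ hy => rw [map_smul]; exact Submodule.smul_mem _ _ hy
  -- the three sl2 relations
  have rel1 : h * e - e * h = (2 : K) • e := by
    refine B.ext fun t => ?_
    rw [hB]
    have hv := hvdeg t
    show h (e (v t)) - e (h (v t)) = (2 : K) • e (v t)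
    rw [hh _ _ (hdeg' _ _ hv), hh _ _ hv, map_smul, ← sub_smul]
    congr 1
    push_cast
    ring
  have rel2 : h * f - f * h = (-2 : K) • f := by
    refine B.ext fun t => ?_
    rw [hB]
    have hv := hvdeg t
    show h (f (v t)) - f (h (v t)) = (-2 : K) • f (v t)
    rw [hh _ _ hv, map_smul, hfv, hh _ _ (hwdeg t), ← sub_smul]
    congr 1
    push_cast
    ring
  have hew : ∀ t : ι, e (w t) = (((t.2.1 : ℕ) : K) * (((t.1 : ℕ) : K) + 1 - ((t.2.1 : ℕ) : K)))
      • (e ^ ((t.2.1 : ℕ))) ((bP (t.1 : ℕ) t.2.2 : A)) := by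
    rintro ⟨i, k, j⟩
    show e ((_ : K) • _) = _
    rw [map_smul]
    rcases Nat.eq_zero_or_pos (k : ℕ) with hk | hk
    · rw [hk]
      simp
    · congr 1
      rw [show (e ^ ((k : ℕ))) = e ^ (((k : ℕ) - 1) + 1) by congr 1; omega, pow_succ']
      rfl
  have hfev : ∀ t : ι, f (e (v t)) = ((((t.2.1 : ℕ) : K) + 1) * (((t.1 : ℕ) : K) - ((t.2.1 : ℕ) : K)))
      • (e ^ ((t.2.1 : ℕ))) ((bP (t.1 : ℕ) t.2.2 : A)) := by
    rintro ⟨i, k, j⟩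
    have hev : e (v ⟨i, k, j⟩) = (e ^ ((k : ℕ) + 1)) ((bP (i : ℕ) j : A)) := by
      rw [pow_succ']; rfl
    by_cases hki : (k : ℕ) < (i : ℕ)
    · have h1 : e (v ⟨i, k, j⟩) = v ⟨i, ⟨(k : ℕ) + 1, by omega⟩, j⟩ := hev
      rw [h1, hfv]
      show ((((k : ℕ) + 1 : ℕ) : K) * _) • (e ^ (((k : ℕ) + 1) - 1)) _ = _
      rw [show ((k : ℕ) + 1) - 1 = (k : ℕ) by omega]
      congr 1
      push_cast
      ring
    · have hki' : (k : ℕ) = (i : ℕ) := by omega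
      rw [hev, hki', hbPk, map_zero, sub_self, mul_zero, zero_smul]
  have rel3 : e * f - f * e = h := by
    refine B.ext fun t => ?_
    rw [hB]
    show e (f (v t)) - f (e (v t)) = h (v t)
    rw [hfv, hew, hfev, hh _ _ (hvdeg t),
      show v t = (e ^ ((t.2.1 : ℕ))) ((bP (t.1 : ℕ) t.2.2 : A)) from rfl, ← sub_smul]
    congr 1
    push_cast
    ring
  -- conclusion: existence and uniqueness
  refine ⟨f, ⟨fun m => ?_, rel1, rel2, rel3⟩, ?_⟩
  · rintro x ⟨y, hy, rfl⟩
    exact hfdeg m y hy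
  · rintro f' ⟨hf'deg, -, -, hrel3'⟩
    have hc : ∀ x : A, e (f' x) = f' (e x) + h x := by
      intro x
      have := LinearMap.congr_fun hrel3' x
      have h2 : e (f' x) - f' (e x) = h x := this
      linear_combination (norm := abel) h2
    have L : ∀ (δ : ℤ) (x : A), x ∈ 𝒜 δ → ∀ m : ℕ,
        (e ^ (m + 1)) (f' x) = f' ((e ^ (m + 1)) x)
          + (((m : K) + 1) * ((δ : K) + (m : K))) • (e ^ m) x := by
      intro δ x hx m
      induction m with
      | zero =>
          simp only [zero_add, pow_one, pow_zero, Module.End.one_apply, Nat.cast_zero]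
          rw [hc x, hh _ _ hx]
          congr 1
          push_cast
          ring
      | succ m ih =>
          have hstep : (e ^ (m + 1 + 1)) (f' x) = e ((e ^ (m + 1)) (f' x)) := by
            rw [pow_succ']; rfl
          rw [hstep, ih, map_add, map_smul, hc ((e ^ (m + 1)) x), hh _ _ (hpow (m + 1) δ x hx),
            show e ((e ^ (m + 1)) x) = (e ^ (m + 1 + 1)) x from by rw [pow_succ' e (m + 1)]; rfl,
            show e ((e ^ m) x) = (e ^ (m + 1)) x from by rw [pow_succ' e m]; rfl,
            add_assoc, ← add_smul]
          congr 1
          push_cast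
          ring
    -- f' kills primitive vectors
    have claim0 : ∀ (i : ℕ) (p : A), p ∈ P i → f' p = 0 := by
      intro i p hp
      obtain ⟨hpA, hpk⟩ := Submodule.mem_inf.mp hp
      have hker : (e ^ (i + 1)) p = 0 := LinearMap.mem_ker.mp hpk
      have hfp : f' p ∈ 𝒜 (-((i + 2 : ℕ) : ℤ)) := by
        rw [show -((i + 2 : ℕ) : ℤ) = -(i : ℤ) - 2 by push_cast; ring]
        exact hf'deg (-(i : ℤ)) ⟨p, hpA, rfl⟩
      have hEf : (e ^ (i + 2)) (f' p) = 0 := by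
        have hL := L (-(i : ℤ)) p hpA (i + 1)
        rw [show (e ^ (i + 1 + 1)) p = e ((e ^ (i + 1)) p) from by rw [pow_succ' e (i + 1)]; rfl,
          hker, map_zero, map_zero, smul_zero, add_zero] at hL
        rw [show i + 2 = i + 1 + 1 from rfl]
        exact hL
      exact hinj (i + 2) (i + 2) le_rfl (f' p) hfp hEf
    have claimk : ∀ (i k : ℕ) (p : A), p ∈ P i →
        f' ((e ^ k) p) = ((k : K) * ((i : K) + 1 - (k : K))) • (e ^ (k - 1)) p := by
      intro i k
      induction k with
      | zero =>
          intro p hp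
          simp [claim0 i p hp]
      | succ k ih =>
          intro p hp
          have hpA : p ∈ 𝒜 (-(i : ℤ)) := (Submodule.mem_inf.mp hp).1
          have hf'e : f' ((e ^ (k + 1)) p) = e (f' ((e ^ k) p)) - h ((e ^ k) p) := by
            rw [show (e ^ (k + 1)) p = e ((e ^ k) p) from by rw [pow_succ' e k]; rfl,
              eq_sub_iff_add_eq]
            exact (hc _).symm
          rw [hf'e, ih p hp, map_smul, hh _ _ (hpow k _ p hpA)]
          rcases Nat.eq_zero_or_pos k with hk0 | hk
          · subst hk0
            simp only [Nat.cast_zero, zero_mul, zero_smul, smul_zero, zero_sub, pow_zero,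
              Module.End.one_apply, Nat.cast_one, Nat.zero_add]
            rw [show (0 : ℕ) + 1 - 1 = 0 from rfl, pow_zero, ← neg_smul]
            congr 1
            push_cast
            ring
          · rw [show e ((e ^ (k - 1)) p) = (e ^ k) p from by
              conv_rhs => rw [show k = k - 1 + 1 by omega]
              rw [pow_succ' e (k - 1)]; rfl,
              ← sub_smul, show k + 1 - 1 = k from rfl]
            congr 1
            push_cast
            ring
    refine B.ext fun t => ?_
    rw [hB, hfv]
    exact claimk (t.1 : ℕ) (t.2.1 : ℕ) _ (bP (t.1 : ℕ) t.2.2).2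
end
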